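/- Let M be even, S₁ the M-th roots of unity, and θ = π/M. Then for each m with 0 ≤ m ≤ M/2 − 1, the two radii 2cos(πm/M + θ/2) and 2cos(π(m+1)/M − θ/2) coincide, so the sum constellation S₁ + e^{iθ}S₁ lies on exactly M/2 concentric circles (together with possibly the origin excluded since all radii are positive). -/

import Mathlib

/-! Since `e^{ia} + e^{ib} = 2 cos((a - b)/2) e^{i(a + b)/2}`, the point
`e^{2πin/M} + e^{i(2πn'/M + π/M)}` has modulus `2|cos φ(n' - n)|` with `φ(k) = π(2k + 1)/(2M)`.
As `φ(k + M) = φ(k) + π` and `φ(M - 1 - k) = π - φ(k)`, this modulus is `2 cos φ(m)` for some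
`m < M/2`, and there `φ(m) ∈ (0, π/2)`. -/

open Real

theorem norm_exp_I_mul_add_exp_I_mul (a b : ℝ) :
    ‖Complex.exp (Complex.I * a) + Complex.exp (Complex.I * b)‖ = 2 * |cos ((a - b) / 2)| := by
  have h : Complex.exp (Complex.I * a) + Complex.exp (Complex.I * b)
      = Complex.exp (Complex.I * ((a + b) / 2 : ℝ)) * (2 * Complex.cos ((a - b) / 2 : ℝ)) := by
    rw [Complex.cos, mul_div_cancel₀ _ two_ne_zero, mul_add, ← Complex.exp_add, ← Complex.exp_add]
    congr 2 <;> push_cast <;> ring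
  rw [h, norm_mul, Complex.norm_exp_I_mul_ofReal, one_mul, ← Complex.ofReal_cos, norm_mul,
    Complex.norm_real, Real.norm_eq_abs, Complex.norm_two]

section

variable {M : ℝ}

theorem cos_pos_of_abs_two_mul_add_one_lt {x : ℝ} (hx : |2 * x + 1| < M) :
    0 < cos (π * x / M + π / M / 2) := by
  have hM : 0 < M := (abs_nonneg _).trans_lt hx
  obtain ⟨hlo, hhi⟩ := abs_lt.1 hx
  have hangle : π * x / M + π / M / 2 = π / 2 * ((2 * x + 1) / M) := by field_simp
  rw [hangle]
  apply cos_pos_of_mem_Ioo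
  constructor
  · have : -1 < (2 * x + 1) / M := by rw [lt_div_iff₀ hM]; linarith
    nlinarith [pi_pos]
  · have : (2 * x + 1) / M < 1 := by rw [div_lt_iff₀ hM]; linarith
    nlinarith [pi_pos]

theorem cos_sub_one_sub_eq_neg (hM : M ≠ 0) (x : ℝ) :
    cos (π * (M - 1 - x) / M + π / M / 2) = -cos (π * x / M + π / M / 2) := by
  rw [← cos_pi_sub]
  congr 1
  field_simp
  ring

theorem abs_cos_add_int_mul (hM : M ≠ 0) (x c : ℝ) (q : ℤ) :
    |cos (π * (x + M * q) / M + c)| = |cos (π * x / M + c)| := by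
  have : π * (x + M * q) / M + c = π * x / M + c + q * π := by field_simp; ring
  rw [this, cos_add_int_mul_pi, abs_mul, abs_neg_one_zpow, one_mul]

end

theorem exists_lt_abs_cos_eq {M : ℕ} (hM : 0 < M) (k : ℤ) (c : ℝ) :
    ∃ j : ℕ, j < M ∧ |cos (π * k / M + c)| = |cos (π * j / M + c)| := by
  have hM' : (0 : ℤ) < M := by exact_mod_cast hM
  have hj : (((k % M).toNat : ℕ) : ℤ) = k % M := Int.toNat_of_nonneg (Int.emod_nonneg k hM'.ne')
  refine ⟨(k % M).toNat, by have := Int.emod_lt_of_pos k hM'; omega, ?_⟩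
  have hk : (k : ℝ) = ((k % M).toNat : ℕ) + M * (k / M : ℤ) := by
    exact_mod_cast (hj ▸ Int.emod_add_mul_ediv k M).symm
  rw [hk, abs_cos_add_int_mul (by positivity)]

theorem cos_pos_of_le_half_sub_one {M m : ℕ} (hEven : Even M) (hm : m ≤ M / 2 - 1) :
    0 < cos (π * m / M + π / M / 2) := by
  obtain ⟨K, rfl⟩ := hEven
  rcases Nat.eq_zero_or_pos K with rfl | hK
  · simp -- for `M = 0` the angle is `π * m / 0 + π / 0 / 2 = 0`
  · apply cos_pos_of_abs_two_mul_add_one_lt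
    rw [abs_of_nonneg (by positivity)]
    exact_mod_cast (by omega : 2 * m + 1 < K + K)

theorem exists_le_half_sub_one_abs_cos_eq {M : ℕ} (hEven : Even M) {j : ℕ} (hj : j < M) :
    ∃ m : ℕ, m ≤ M / 2 - 1 ∧
      |cos (π * j / M + π / M / 2)| = cos (π * m / M + π / M / 2) := by
  by_cases hjM : j ≤ M / 2 - 1
  · exact ⟨j, hjM, abs_of_pos (cos_pos_of_le_half_sub_one hEven hjM)⟩
  · obtain ⟨K, rfl⟩ := hEven
    have hm : K + K - 1 - j ≤ (K + K) / 2 - 1 := by omega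
    refine ⟨K + K - 1 - j, hm, ?_⟩
    have hpos := cos_pos_of_le_half_sub_one ⟨K, rfl⟩ hm
    have hcast : ((K + K - 1 - j : ℕ) : ℝ) = ((K + K : ℕ) : ℝ) - 1 - j := by
      rw [Nat.cast_sub (by omega), Nat.cast_sub (by omega)]; push_cast; ring
    have hM : ((K + K : ℕ) : ℝ) ≠ 0 := by exact_mod_cast (by omega : K + K ≠ 0)
    rw [hcast, cos_sub_one_sub_eq_neg hM] at hpos ⊢
    rw [abs_of_neg (neg_pos.1 hpos)]

theorem stmt_8_general (M : ℕ) (hEven : Even M) :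
    (∀ m : ℕ, m ≤ M / 2 - 1 →
        2 * Real.cos (π * m / M + (π / M) / 2)
          = 2 * Real.cos (π * (m + 1) / M - (π / M) / 2) ∧
        0 < 2 * Real.cos (π * m / M + (π / M) / 2)) ∧
    (∀ n n' : ℕ, n < M → n' < M →
      ‖(Complex.exp (Complex.I * (2 * π * n / M : ℝ))
          + Complex.exp (Complex.I * (2 * π * n' / M + π / M : ℝ)))‖
        ∈ {r : ℝ | ∃ m : ℕ, m ≤ M / 2 - 1 ∧ r = 2 * Real.cos (π * m / M + (π / M) / 2)}) := by
  refine ⟨fun m hm => ⟨by ring_nf, mul_pos two_pos (cos_pos_of_le_half_sub_one hEven hm)⟩, ?_⟩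
  intro n n' hn _
  obtain ⟨j, hj, hk⟩ := exists_lt_abs_cos_eq (by omega : 0 < M) ((n' : ℤ) - n) (π / M / 2)
  obtain ⟨m, hm, hjm⟩ := exists_le_half_sub_one_abs_cos_eq hEven hj
  refine ⟨m, hm, ?_⟩
  rw [norm_exp_I_mul_add_exp_I_mul, ← hjm, ← hk, ← cos_neg]
  congr 3
  push_cast
  ring

/-- For `M` even and `θ = π/M`, the outer and inner radii coincide:
`2cos(πm/M + θ/2) = 2cos(π(m+1)/M − θ/2)` for each `0 ≤ m ≤ M/2 − 1`, and all
these radii are positive; consequently the sum constellation `S₁ + e^{iθ}S₁`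
of the `M`-th roots of unity lies on exactly `M/2` concentric circles. -/
theorem stmt_8 (M : ℕ) (hM : 0 < M) (hEven : Even M) :
    (∀ m : ℕ, m ≤ M / 2 - 1 →
        2 * Real.cos (π * m / M + (π / M) / 2)
          = 2 * Real.cos (π * (m + 1) / M - (π / M) / 2) ∧
        0 < 2 * Real.cos (π * m / M + (π / M) / 2)) ∧
    (∀ n n' : ℕ, n < M → n' < M →
      ‖(Complex.exp (Complex.I * (2 * π * n / M : ℝ))
          + Complex.exp (Complex.I * (2 * π * n' / M + π / M : ℝ)))‖
        ∈ {r : ℝ | ∃ m : ℕ, m ≤ M / 2 - 1 ∧ r = 2 * Real.cos (π * m / M + (π / M) / 2)}) :=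
  stmt_8_general M hEven
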